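/- arXiv:1201.3057 — 3 statements merged into one kernel-verified Lean document; each statement's English description precedes it below -/
import Mathlib

section
/- In the ring of formal power series over ℚ in one variable t, the infinite product ∏_{i≥1} (1 - t^i)^{L_q(i)} equals 1 - q·t, where L_q(i) = (1/i) Σ_{d|i} μ(d) q^{i/d}. -/
/-!
Compare logarithmic derivatives. The factor `(1 - t^i)^(L i)` has logarithmic derivative
`-i L(i) t^(i-1) / (1 - t^i)`, so in degree `n - 1` the logarithmic derivative of the partial
product is `-∑_{i ∣ n} i L(i)`, which is `-q^n` by Möbius inversion; this is also the
coefficient of `-q / (1 - q t)`, the logarithmic derivative of `1 - q t`. Two power series with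
the same constant term whose logarithmic derivatives agree below degree `N` agree up to degree
`N`, since `f' = a f` determines `(m + 1) f_(m+1)` from the lower coefficients.
-/

open ArithmeticFunction Finset PowerSeries

namespace Derivation

variable {R A : Type*} [CommSemiring R] [CommSemiring A] [Algebra R A] (D : Derivation R A A)

theorem map_pow_of_eq_mul {f a : A} (h : D f = a * f) (n : ℕ) :
    D (f ^ n) = (n • a) * f ^ n := by
  rcases n with _ | n
  · simp
  · rw [leibniz_pow, h, smul_eq_mul, nsmul_eq_mul, nsmul_eq_mul, Nat.add_sub_cancel, pow_succ]
    ring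

theorem map_prod_of_eq_mul {ι : Type*} {s : Finset ι} {f a : ι → A}
    (h : ∀ i ∈ s, D (f i) = a i * f i) :
    D (∏ i ∈ s, f i) = (∑ i ∈ s, a i) * ∏ i ∈ s, f i := by
  induction s using Finset.cons_induction with
  | empty => simp
  | cons j s hj ih =>
    rw [prod_cons, sum_cons, leibniz, h j (mem_cons_self j s),
      ih fun i hi => h i (mem_cons_of_mem hi), smul_eq_mul, smul_eq_mul]
    ring

end Derivation

namespace PowerSeries

variable {R : Type*} [CommRing R]

theorem X_pow_pred_mul_expand_mk_one {i : ℕ} (hi : i ≠ 0) :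
    X ^ (i - 1) * expand i hi (mk 1 : R⟦X⟧) = mk fun n => if i ∣ n + 1 then 1 else 0 := by
  ext m
  rw [coeff_X_pow_mul', coeff_expand, coeff_mk]
  by_cases hm : i - 1 ≤ m
  · have hsucc : m + 1 = m - (i - 1) + i := by omega
    simp [hm, hsucc, Nat.dvd_add_self_right]
  · have hndvd : ¬ i ∣ m + 1 := fun hd => hm (by have := Nat.le_of_dvd m.succ_pos hd; omega)
    simp [hm, hndvd]

theorem mk_dvd_succ_mul_one_sub_X_pow {i : ℕ} (hi : i ≠ 0) :
    (mk fun n => if i ∣ n + 1 then (1 : R) else 0) * (1 - X ^ i) = X ^ (i - 1) := by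
  have h := congrArg (expand i hi) (mk_one_mul_one_sub_eq_one R)
  rw [map_mul, map_sub, map_one, expand_X] at h
  rw [← X_pow_pred_mul_expand_mk_one hi, mul_assoc, h, mul_one]

theorem derivative_one_sub_X_pow {i : ℕ} (hi : i ≠ 0) :
    d⁄dX R (1 - X ^ i) =
      (-C (i : R) * mk fun n => if i ∣ n + 1 then 1 else 0) * (1 - X ^ i) := by
  rw [mul_assoc, mk_dvd_succ_mul_one_sub_X_pow hi]
  simp [Derivation.leibniz_pow, nsmul_eq_mul]

theorem derivative_one_sub_C_mul_X (c : R) :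
    d⁄dX R (1 - C c * X) = (-C c * rescale c (mk 1)) * (1 - C c * X) := by
  have h := congrArg (rescale c) (mk_one_mul_one_sub_eq_one R)
  rw [map_mul, map_sub, map_one, rescale_X] at h
  rw [mul_assoc, h, mul_one]
  simp

theorem coeff_eq_of_derivative_eq_mul [IsDomain R] [CharZero R] {f g a b : R⟦X⟧} {N : ℕ}
    (hf : d⁄dX R f = a * f) (hg : d⁄dX R g = b * g)
    (h0 : constantCoeff f = constantCoeff g) (hab : ∀ m < N, coeff m a = coeff m b) :
    ∀ m ≤ N, coeff m f = coeff m g := by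
  intro m
  induction m using Nat.strong_induction_on with
  | _ m ih =>
  intro hm
  rcases m with _ | m
  · simpa using h0
  · have hderiv : coeff m (d⁄dX R f) = coeff m (d⁄dX R g) := by
      rw [hf, hg, coeff_mul, coeff_mul]
      refine sum_congr rfl fun p hp => ?_
      have := mem_antidiagonal.mp hp
      rw [hab p.1 (by omega), ih p.2 (by omega) (by omega)]
    rw [coeff_derivative, coeff_derivative] at hderiv
    exact mul_right_cancel₀ (Nat.cast_add_one_ne_zero m) hderiv

theorem coeff_sum_Icc_nsmul_mk_dvd_succ (L : ℕ → ℕ) {N m : ℕ} (hm : m < N) :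
    coeff m (∑ i ∈ Icc 1 N, L i • (-C (i : R) * mk fun n => if i ∣ n + 1 then 1 else 0)) =
      -∑ i ∈ (m + 1).divisors, (i : R) * L i := by
  have hdivisors : {i ∈ Icc 1 N | i ∣ m + 1} = (m + 1).divisors := by
    ext i
    simp only [mem_filter, mem_Icc, Nat.mem_divisors]
    constructor
    · rintro ⟨-, hd⟩
      exact ⟨hd, m.succ_ne_zero⟩
    · rintro ⟨hd, -⟩
      have := Nat.le_of_dvd m.succ_pos hd
      have := Nat.pos_of_dvd_of_pos hd m.succ_pos
      exact ⟨⟨by omega, by omega⟩, hd⟩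
  rw [map_sum, ← hdivisors, sum_filter, ← sum_neg_distrib]
  refine sum_congr rfl fun i _ => ?_
  rw [map_nsmul, neg_mul, map_neg, coeff_C_mul, coeff_mk]
  split_ifs <;> simp [nsmul_eq_mul, mul_comm]

end PowerSeries

theorem sum_divisors_mul_eq_pow (q : ℕ) (L : ℕ → ℕ)
    (hL : ∀ i, 1 ≤ i →
      (L i : ℚ) = (1 / i) * ∑ d ∈ i.divisors, (moebius d : ℚ) * (q : ℚ) ^ (i / d))
    {n : ℕ} (hn : 0 < n) : ∑ i ∈ n.divisors, (i : ℚ) * L i = (q : ℚ) ^ n := by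
  revert n
  rw [sum_eq_iff_sum_smul_moebius_eq]
  intro n hn
  rw [Nat.sum_divisorsAntidiagonal (f := fun d m => moebius d • (q : ℚ) ^ m), hL n hn]
  have hn0 : (n : ℚ) ≠ 0 := Nat.cast_ne_zero.mpr hn.ne'
  simp only [zsmul_eq_mul]
  field_simp

/-- The `i`-th factor is `≡ 1 mod t^i`, so the coefficients of degree `≤ N` of the infinite
product are those of the partial product over `1 ≤ i ≤ N`. -/
theorem stmt_1_general (q : ℕ) (L : ℕ → ℕ)
    (hL : ∀ i, 1 ≤ i →
      (L i : ℚ) = (1 / i) * ∑ d ∈ i.divisors, (moebius d : ℚ) * (q : ℚ) ^ (i / d))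
    (N k : ℕ) (hk : k ≤ N) :
    PowerSeries.coeff k (∏ i ∈ Finset.Icc 1 N, (1 - (PowerSeries.X : ℚ⟦X⟧) ^ i) ^ (L i)) =
      PowerSeries.coeff k (1 - PowerSeries.C (q : ℚ) * PowerSeries.X) := by
  have hne : ∀ i ∈ Icc 1 N, i ≠ 0 := fun i hi => Nat.one_le_iff_ne_zero.mp (mem_Icc.mp hi).1
  have hfactor : ∀ i ∈ Icc 1 N, d⁄dX ℚ ((1 - X ^ i) ^ L i) =
      (L i • (-C (i : ℚ) * mk fun n => if i ∣ n + 1 then 1 else 0)) * (1 - X ^ i) ^ L i :=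
    fun i hi => (d⁄dX ℚ).map_pow_of_eq_mul (derivative_one_sub_X_pow (hne i hi)) _
  refine coeff_eq_of_derivative_eq_mul ((d⁄dX ℚ).map_prod_of_eq_mul hfactor)
    (derivative_one_sub_C_mul_X _) ?_ (fun m hm => ?_) k hk
  · rw [map_prod, prod_eq_one fun i hi => by simp [zero_pow (hne i hi)]]
    simp
  · rw [coeff_sum_Icc_nsmul_mk_dvd_succ L hm, sum_divisors_mul_eq_pow q L hL m.succ_pos,
      neg_mul, map_neg, coeff_C_mul, coeff_rescale, coeff_mk, Pi.one_apply, mul_one, pow_succ']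

/-- In `ℚ[[t]]` one has `∏_{i ≥ 1} (1 - t^i)^(L_q(i)) = 1 - q·t`, where
`L_q(i) = (1/i) ∑_{d ∣ i} μ(d) q^(i/d)` is a nonnegative integer. The infinite
product converges t-adically since the `i`-th factor is `≡ 1 mod t^i`; we express
the identity by saying that every coefficient of degree `k ≤ N` of the partial
product over `1 ≤ i ≤ N` agrees with the corresponding coefficient of `1 - q·t`. -/
theorem stmt_1 (q : ℕ) (hq : 0 < q) (L : ℕ → ℕ)
    (hL : ∀ i, 1 ≤ i →
      (L i : ℚ) = (1 / i) * ∑ d ∈ i.divisors, (moebius d : ℚ) * (q : ℚ) ^ (i / d))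
    (N k : ℕ) (hk : k ≤ N) :
    PowerSeries.coeff k (∏ i ∈ Finset.Icc 1 N, (1 - (PowerSeries.X : ℚ⟦X⟧) ^ i) ^ (L i)) =
      PowerSeries.coeff k (1 - PowerSeries.C (q : ℚ) * PowerSeries.X) :=
  stmt_1_general q L hL N k hk
end

section
/- In the ring of formal power series in two sets of indeterminates {y_j} and t over ℚ, one has ∏_{i≥1} ∏_{j≥1} (1 - y_j^i t^i)^{-l_q(i)} = ∏_{j≥1} (1 - y_j q t)^{-1} / ∏_{j≥1} (1 - y_j t)^{-1}, where l_q(1) = L_q(1) - 1 = q - 1 and l_q(i) = L_q(i) for i ≥ 2. -/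
open ArithmeticFunction Finset PowerSeries

namespace Stmt2Aux

noncomputable section

/-- Geometric-type series `∑_{i ∣ n} X^n`. -/
def B (i : ℕ) : ℚ⟦X⟧ := PowerSeries.mk fun n => if i ∣ n then 1 else 0

@[simp] lemma coeff_B (i n : ℕ) : coeff n (B i) = if i ∣ n then 1 else 0 :=
  coeff_mk _ _

lemma geom_mul (i : ℕ) (hi : 1 ≤ i) : ((1 : ℚ⟦X⟧) - X ^ i) * B i = 1 := by
  ext n
  rw [sub_mul, one_mul, map_sub, coeff_X_pow_mul' (B i) i n, coeff_B, PowerSeries.coeff_one]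
  rcases Nat.eq_zero_or_pos n with h0 | h0
  · subst h0
    rw [if_pos (dvd_zero i), if_neg (show ¬ i ≤ 0 by omega), if_pos rfl]
    norm_num
  · rw [if_neg (show ¬ n = 0 by omega)]
    by_cases hle : i ≤ n
    · rw [if_pos hle, coeff_B]
      by_cases hdvd : i ∣ n
      · rw [if_pos hdvd, if_pos (Nat.dvd_sub hdvd dvd_rfl), sub_self]
      · rw [if_neg hdvd, if_neg (show ¬ i ∣ n - i from fun h => hdvd (by
          have hni : n - i + i = n := by omega
          exact hni ▸ Nat.dvd_add h dvd_rfl)), sub_zero]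
    · rw [if_neg hle, if_neg (show ¬ i ∣ n from fun h => hle (Nat.le_of_dvd h0 h)), sub_zero]

lemma D_prod {ι : Type*} [DecidableEq ι] (s : Finset ι) (f : ι → ℚ⟦X⟧) :
    d⁄dX ℚ (∏ i ∈ s, f i) = ∑ i ∈ s, (∏ j ∈ s.erase i, f j) * d⁄dX ℚ (f i) := by
  induction s using Finset.induction_on with
  | empty => simp
  | @insert a s ha ih =>
    rw [Finset.prod_insert ha, Derivation.leibniz, smul_eq_mul, smul_eq_mul, ih,
      Finset.sum_insert ha, Finset.erase_insert ha, Finset.mul_sum]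
    rw [add_comm]
    congr 1
    apply Finset.sum_congr rfl
    intro i hi
    have hne : a ≠ i := fun h => ha (h ▸ hi)
    rw [Finset.erase_insert_of_ne hne, Finset.prod_insert
      (fun h => ha (Finset.mem_of_mem_erase h))]
    ring

lemma key_div (q : ℕ) (L : ℕ → ℕ)
    (hL : ∀ i, 1 ≤ i →
      (L i : ℚ) = (1 / i) * ∑ d ∈ i.divisors, (moebius d : ℚ) * (q : ℚ) ^ (i / d)) :
    ∀ n, 1 ≤ n → ∑ d ∈ n.divisors, ((d * L d : ℕ) : ℚ) = (q : ℚ) ^ n := by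
  intro n hn
  refine (sum_eq_iff_sum_smul_moebius_eq (R := ℚ)
    (f := fun d => ((d * L d : ℕ) : ℚ)) (g := fun n => (q : ℚ) ^ n)).mpr ?_ n hn
  intro m hm
  have hm0 : (m : ℚ) ≠ 0 := by exact_mod_cast hm.ne'
  have h1 : ((m : ℚ)) * (L m : ℚ) = ∑ d ∈ m.divisors, (moebius d : ℚ) * (q : ℚ) ^ (m / d) := by
    rw [hL m hm]
    field_simp
  calc ∑ x ∈ m.divisorsAntidiagonal, (moebius x.1 : ℤ) • ((q : ℚ) ^ x.2)
      = ∑ d ∈ m.divisors, (moebius d : ℚ) * (q : ℚ) ^ (m / d) := by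
        rw [Nat.sum_divisorsAntidiagonal (fun a b => (moebius a : ℤ) • ((q : ℚ) ^ b))]
        simp [zsmul_eq_mul]
    _ = ((m * L m : ℕ) : ℚ) := by push_cast; exact h1.symm

lemma D_pow_sub (i c : ℕ) (hi : 1 ≤ i) :
    d⁄dX ℚ ((1 - X ^ i) ^ (c + 1)) =
      PowerSeries.C (-((i : ℚ) * (c + 1))) * X ^ (i - 1) * (1 - X ^ i) ^ c := by
  rw [Derivation.leibniz_pow]
  have hD : d⁄dX ℚ ((1 : ℚ⟦X⟧) - X ^ i) = -((i : ℚ⟦X⟧) * X ^ (i - 1)) := by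
    rw [map_sub, Derivation.leibniz_pow, PowerSeries.derivative_X, Derivation.map_one_eq_zero,
      smul_eq_mul, mul_one, nsmul_eq_mul, zero_sub]
  rw [hD, Nat.add_sub_cancel]
  have hC : PowerSeries.C (-((i : ℚ) * (c + 1))) = -((i : ℚ⟦X⟧) * ((c : ℚ⟦X⟧) + 1)) := by
    push_cast
    simp [map_neg, map_mul, map_add, map_one, map_natCast]
  rw [hC]
  rw [smul_eq_mul, nsmul_eq_mul]
  push_cast
  ring

lemma main_q (q : ℕ) (L : ℕ → ℕ) (N : ℕ)
    (hL : ∀ n, 1 ≤ n → ∑ d ∈ n.divisors, ((d * L d : ℕ) : ℚ) = (q : ℚ) ^ n) :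
    (X : ℚ⟦X⟧) ^ (N + 1) ∣
      (∏ i ∈ Finset.Icc 1 N, ((1 : ℚ⟦X⟧) - X ^ i) ^ L i) - (1 - PowerSeries.C (q : ℚ) * X) := by
  set P : ℚ⟦X⟧ := ∏ i ∈ Finset.Icc 1 N, ((1 : ℚ⟦X⟧) - X ^ i) ^ L i with hPdef
  set S : ℚ⟦X⟧ :=
    ∑ i ∈ Finset.Icc 1 N, PowerSeries.C (-((i : ℚ) * (L i : ℚ))) * (X ^ i * B i) with hSdef
  set G : ℚ⟦X⟧ := 1 - PowerSeries.C (q : ℚ) * X with hGdef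
  -- step (a): logarithmic derivative of the product
  have hXDP : X * d⁄dX ℚ P = P * S := by
    rw [hPdef, hSdef, D_prod, Finset.mul_sum, Finset.mul_sum]
    apply Finset.sum_congr rfl
    intro i hi
    have hi1 : 1 ≤ i := (Finset.mem_Icc.mp hi).1
    rcases Nat.eq_zero_or_pos (L i) with h0 | hpos
    · simp [h0]
    · obtain ⟨c, hc⟩ : ∃ c, L i = c + 1 := ⟨L i - 1, by omega⟩
      rw [hc, D_pow_sub i c hi1]
      have hP : (∏ k ∈ Finset.Icc 1 N, ((1 : ℚ⟦X⟧) - X ^ k) ^ L k)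
          = (1 - X ^ i) ^ (c + 1) * ∏ k ∈ (Finset.Icc 1 N).erase i, ((1 : ℚ⟦X⟧) - X ^ k) ^ L k := by
        rw [← hc]
        exact (Finset.mul_prod_erase _ _ hi).symm
      rw [hP]
      have hXi : X * X ^ (i - 1) = (X : ℚ⟦X⟧) ^ i := by
        rw [← pow_succ']
        congr 1
        omega
      have hBc : ((1 : ℚ⟦X⟧) - X ^ i) ^ (c + 1) * B i = (1 - X ^ i) ^ c := by
        rw [pow_succ, mul_assoc, geom_mul i hi1, mul_one]
      have hcast : ((c : ℚ) + 1) = (((c + 1 : ℕ)) : ℚ) := by push_cast; ring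
      calc X * ((∏ k ∈ (Finset.Icc 1 N).erase i, ((1 : ℚ⟦X⟧) - X ^ k) ^ L k) *
              (PowerSeries.C (-((i : ℚ) * ((c : ℚ) + 1))) * X ^ (i - 1) * (1 - X ^ i) ^ c))
          = (∏ k ∈ (Finset.Icc 1 N).erase i, ((1 : ℚ⟦X⟧) - X ^ k) ^ L k) *
              PowerSeries.C (-((i : ℚ) * ((c : ℚ) + 1))) * (1 - X ^ i) ^ c * (X * X ^ (i - 1)) := by
            ring
        _ = (∏ k ∈ (Finset.Icc 1 N).erase i, ((1 : ℚ⟦X⟧) - X ^ k) ^ L k) *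
              PowerSeries.C (-((i : ℚ) * ((c : ℚ) + 1))) * (1 - X ^ i) ^ c * X ^ i := by
            rw [hXi]
        _ = (∏ k ∈ (Finset.Icc 1 N).erase i, ((1 : ℚ⟦X⟧) - X ^ k) ^ L k) *
              PowerSeries.C (-((i : ℚ) * ((c : ℚ) + 1))) * X ^ i * ((1 - X ^ i) ^ (c + 1) * B i) := by
            rw [hBc]
            ring
        _ = (1 - X ^ i) ^ (c + 1) *
              (∏ k ∈ (Finset.Icc 1 N).erase i, ((1 : ℚ⟦X⟧) - X ^ k) ^ L k) *
              (PowerSeries.C (-((i : ℚ) * (((c + 1 : ℕ)) : ℚ))) * (X ^ i * B i)) := by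
            rw [← hcast]
            ring
  -- step (b): coefficients of S
  have hS0 : coeff 0 S = 0 := by
    rw [hSdef, map_sum]
    apply Finset.sum_eq_zero
    intro i hi
    have hi1 : 1 ≤ i := (Finset.mem_Icc.mp hi).1
    rw [coeff_C_mul, coeff_X_pow_mul', if_neg (show ¬ i ≤ 0 by omega), mul_zero]
  have hSn : ∀ n, 1 ≤ n → n ≤ N → coeff n S = -((q : ℚ) ^ n) := by
    intro n h1 h2
    rw [hSdef, map_sum]
    have hterm : ∀ i ∈ Finset.Icc 1 N,
        coeff n (PowerSeries.C (-((i : ℚ) * (L i : ℚ))) * (X ^ i * B i))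
          = if i ∣ n then -(((i * L i : ℕ)) : ℚ) else 0 := by
      intro i hi
      have hi1 : 1 ≤ i := (Finset.mem_Icc.mp hi).1
      rw [coeff_C_mul, coeff_X_pow_mul']
      by_cases hle : i ≤ n
      · rw [if_pos hle, coeff_B]
        by_cases hdvd : i ∣ n
        · rw [if_pos (Nat.dvd_sub hdvd dvd_rfl), if_pos hdvd, mul_one]
          push_cast
          ring
        · rw [if_neg (show ¬ i ∣ n - i from fun h => hdvd (by
            have hni : n - i + i = n := by omega
            exact hni ▸ Nat.dvd_add h dvd_rfl)), if_neg hdvd, mul_zero]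
      · rw [if_neg hle, mul_zero,
          if_neg (show ¬ i ∣ n from fun h => hle (Nat.le_of_dvd (by omega) h))]
    rw [Finset.sum_congr rfl hterm, ← Finset.sum_filter]
    have hfil : (Finset.Icc 1 N).filter (fun i => i ∣ n) = n.divisors := by
      ext d
      simp only [Finset.mem_filter, Finset.mem_Icc, Nat.mem_divisors]
      constructor
      · rintro ⟨⟨h1d, h2d⟩, h3⟩
        exact ⟨h3, by omega⟩
      · rintro ⟨h3, -⟩
        exact ⟨⟨Nat.pos_of_dvd_of_pos h3 (by omega), le_trans (Nat.le_of_dvd (by omega) h3) h2⟩, h3⟩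
    rw [hfil, Finset.sum_neg_distrib, hL n h1]
  -- step (c)
  have hGS : (X : ℚ⟦X⟧) ^ (N + 1) ∣ (G * S + PowerSeries.C (q : ℚ) * X) := by
    rw [PowerSeries.X_pow_dvd_iff]
    intro m hm
    have hGSm : ∀ m' : ℕ, coeff m' (G * S) = coeff m' S -
        (q : ℚ) * (if m' = 0 then 0 else coeff (m' - 1) S) := by
      intro m'
      rw [hGdef, sub_mul, one_mul, map_sub, mul_assoc, coeff_C_mul]
      congr 1
      match m' with
      | 0 => simp
      | (m'' + 1) => rw [coeff_succ_X_mul, if_neg (Nat.succ_ne_zero m''), Nat.add_sub_cancel]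
    rw [map_add, hGSm, coeff_C_mul]
    match m, hm with
    | 0, _ => simp [hS0]
    | 1, hm =>
      rw [hSn 1 le_rfl (by omega), if_neg one_ne_zero]
      simp [hS0, PowerSeries.coeff_X]
    | (m + 2), hm =>
      rw [hSn (m + 2) (by omega) (by omega), if_neg (by omega),
        hSn (m + 2 - 1) (by omega) (by omega), PowerSeries.coeff_X, if_neg (by omega)]
      have : (m + 2 - 1) = m + 1 := by omega
      rw [this]
      push_cast
      ring
  -- step (d): the target satisfies the same ODE exactly
  have hDG : d⁄dX ℚ G = -(PowerSeries.C (q : ℚ)) := by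
    rw [hGdef, map_sub, Derivation.map_one_eq_zero, Derivation.leibniz,
      PowerSeries.derivative_X, PowerSeries.derivative_C, smul_eq_mul, smul_eq_mul,
      mul_one, mul_zero, add_zero, zero_sub]
  -- step (e): the difference satisfies the ODE mod X^(N+1)
  have hE : (X : ℚ⟦X⟧) ^ (N + 1) ∣
      (G * (X * d⁄dX ℚ (P - G)) + PowerSeries.C (q : ℚ) * X * (P - G)) := by
    have heq : G * (X * d⁄dX ℚ (P - G)) + PowerSeries.C (q : ℚ) * X * (P - G)
        = P * (G * S + PowerSeries.C (q : ℚ) * X) := by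
      rw [map_sub, hDG, mul_sub, hXDP]
      ring
    rw [heq]
    exact Dvd.dvd.mul_left hGS P
  -- step (f): coefficient induction
  have hP0 : coeff 0 P = 1 := by
    rw [hPdef, coeff_zero_eq_constantCoeff, map_prod]
    apply Finset.prod_eq_one
    intro i hi
    have hi1 : 1 ≤ i := (Finset.mem_Icc.mp hi).1
    rw [map_pow, map_sub, map_one, map_pow, constantCoeff_X, zero_pow (by omega), sub_zero,
      one_pow]
  have hG0 : coeff 0 G = 1 := by
    rw [hGdef]
    simp
  have hcoeff : ∀ n, n ≤ N → coeff n (P - G) = 0 := by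
    intro n
    induction n using Nat.strong_induction_on with
    | _ n ih =>
      intro hn
      match n, hn with
      | 0, _ => rw [map_sub, hP0, hG0, sub_self]
      | (n + 1), hn =>
        have hprev : coeff n (P - G) = 0 := ih n (by omega) (by omega)
        have h0 := (PowerSeries.X_pow_dvd_iff.mp hE) (n + 1) (by omega)
        have hXD : coeff n (X * d⁄dX ℚ (P - G)) = 0 := by
          match n, hprev with
          | 0, _ =>
            rw [coeff_zero_eq_constantCoeff, map_mul, constantCoeff_X, zero_mul]
          | (m + 1), hprev =>
            rw [coeff_succ_X_mul, PowerSeries.coeff_derivative, hprev, zero_mul]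
        have hA : coeff (n + 1) (X * d⁄dX ℚ (P - G)) = coeff (n + 1) (P - G) * ((n : ℚ) + 1) := by
          rw [coeff_succ_X_mul, PowerSeries.coeff_derivative]
        have hB1 : coeff (n + 1) (G * (X * d⁄dX ℚ (P - G)))
            = coeff (n + 1) (X * d⁄dX ℚ (P - G)) - (q : ℚ) * coeff n (X * d⁄dX ℚ (P - G)) := by
          rw [hGdef, sub_mul, one_mul, map_sub, mul_assoc, coeff_C_mul, coeff_succ_X_mul,
            coeff_succ_X_mul]
        have hB2 : coeff (n + 1) (PowerSeries.C (q : ℚ) * X * (P - G))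
            = (q : ℚ) * coeff n (P - G) := by
          rw [mul_assoc, coeff_C_mul, coeff_succ_X_mul]
        rw [map_add, hB1, hB2, hA, hXD, hprev, mul_zero, sub_zero, add_zero] at h0
        have hne : ((n : ℚ) + 1) ≠ 0 := by positivity
        rcases mul_eq_zero.mp h0 with h | h
        · exact h
        · exact absurd h hne
  rw [PowerSeries.X_pow_dvd_iff]
  intro m hm
  exact hcoeff m (by omega)

lemma dvd_prod_sub {R : Type*} [CommRing R] {h : R} {ι : Type*} (s : Finset ι) (f g : ι → R)
    (hfg : ∀ j ∈ s, h ∣ f j - g j) : h ∣ (∏ j ∈ s, f j) - ∏ j ∈ s, g j := by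
  classical
  induction s using Finset.induction_on with
  | empty => simp
  | @insert a s ha ih =>
    rw [Finset.prod_insert ha, Finset.prod_insert ha]
    have h1 : h ∣ f a - g a := hfg a (Finset.mem_insert_self a s)
    have h2 : h ∣ (∏ j ∈ s, f j) - ∏ j ∈ s, g j :=
      ih fun j hj => hfg j (Finset.mem_insert_of_mem hj)
    have key : f a * ∏ j ∈ s, f j - g a * ∏ j ∈ s, g j
        = (f a - g a) * ∏ j ∈ s, f j + g a * ((∏ j ∈ s, f j) - ∏ j ∈ s, g j) := by
      ring
    rw [key]
    exact dvd_add (h1.mul_right _) (h2.mul_left _)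

end

end Stmt2Aux

open Stmt2Aux in
/-- In the formal power series ring in variables `y_1, …, y_M` (coefficients) and `t`,
`∏_{i≥1} ∏_j (1 - y_j^i t^i)^(-l_q(i)) = ∏_j (1 - y_j q t)^(-1) / ∏_j (1 - y_j t)^(-1)`,
where `l_q(1) = L_q(1) - 1 = q - 1` and `l_q(i) = L_q(i)` for `i ≥ 2`.
Clearing the (unit) inverses, this says
`(∏_{i≥1} ∏_j (1 - y_j^i t^i)^(l_q(i))) · ∏_j (1 - y_j t) = ∏_j (1 - q y_j t)`;
t-adic convergence of the product over `i` is expressed by comparing all coefficients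
of degree `k ≤ N` with the partial product over `1 ≤ i ≤ N`. -/
theorem stmt_2 (q : ℕ) (hq : 2 ≤ q) (L l : ℕ → ℕ)
    (hL : ∀ i, 1 ≤ i →
      (L i : ℚ) = (1 / i) * ∑ d ∈ i.divisors, (moebius d : ℚ) * (q : ℚ) ^ (i / d))
    (hl1 : l 1 = L 1 - 1) (hl : ∀ i, 2 ≤ i → l i = L i)
    (M N k : ℕ) (hk : k ≤ N) :
    PowerSeries.coeff (R := MvPolynomial (Fin M) ℚ) k
      ((∏ i ∈ Finset.Icc 1 N, ∏ j : Fin M,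
          (1 - (PowerSeries.C (MvPolynomial.X j) * PowerSeries.X) ^ i) ^ (l i)) *
        ∏ j : Fin M, (1 - PowerSeries.C (MvPolynomial.X j) * PowerSeries.X)) =
    PowerSeries.coeff (R := MvPolynomial (Fin M) ℚ) k
      (∏ j : Fin M,
        (1 - PowerSeries.C ((q : ℚ) • MvPolynomial.X j) * PowerSeries.X)) := by
  classical
  set R := MvPolynomial (Fin M) ℚ with hR
  have hL1 : L 1 = q := by
    have h := hL 1 le_rfl
    rw [Nat.divisors_one] at h
    simp at h
    exact_mod_cast h
  rcases Nat.eq_zero_or_pos N with hN0 | hN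
  · -- N = 0 forces k = 0, both sides have constant coefficient 1
    subst hN0
    have hk0 : k = 0 := by omega
    subst hk0
    rw [Finset.Icc_eq_empty (by omega), Finset.prod_empty, one_mul]
    simp [PowerSeries.coeff_zero_eq_constantCoeff, map_prod, map_sub, map_mul,
      PowerSeries.constantCoeff_X]
  -- N ≥ 1
  have key := key_div q L hL
  have main := main_q q L N key
  -- transport to R⟦X⟧ for each variable
  have trans : ∀ j : Fin M, (PowerSeries.X : R⟦X⟧) ^ (N + 1) ∣
      (∏ i ∈ Finset.Icc 1 N,
          ((1 : R⟦X⟧) - (PowerSeries.C (MvPolynomial.X j) * PowerSeries.X) ^ i) ^ L i) -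
        (1 - PowerSeries.C ((q : ℚ) • MvPolynomial.X j) * PowerSeries.X) := by
    intro j
    set ψ : ℚ⟦X⟧ →+* R⟦X⟧ :=
      (PowerSeries.rescale (MvPolynomial.X j)).comp (PowerSeries.map (algebraMap ℚ R)) with hψ
    have hψX : ψ PowerSeries.X = PowerSeries.C (MvPolynomial.X j) * PowerSeries.X := by
      rw [hψ, RingHom.comp_apply, PowerSeries.map_X, PowerSeries.rescale_X]
    have hψC : ∀ a : ℚ, ψ (PowerSeries.C a) = PowerSeries.C (MvPolynomial.C a) := by
      intro a
      rw [hψ, RingHom.comp_apply, PowerSeries.map_C]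
      ext n
      rw [PowerSeries.coeff_rescale]
      rcases Nat.eq_zero_or_pos n with h | h
      · subst h
        simp [MvPolynomial.algebraMap_eq]
        exact MvPolynomial.coeff_C _ _
      · rw [PowerSeries.coeff_C, PowerSeries.coeff_C, if_neg (by omega), if_neg (by omega),
          mul_zero]
    have hdvd := map_dvd ψ main
    rw [map_sub, map_prod, map_pow] at hdvd
    have h3 : (PowerSeries.X : R⟦X⟧) ^ (N + 1) ∣ ψ PowerSeries.X ^ (N + 1) := by
      rw [hψX, mul_pow]
      exact Dvd.intro_left _ rfl
    refine dvd_trans h3 (dvd_trans hdvd (dvd_of_eq ?_))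
    congr 1
    · apply Finset.prod_congr rfl
      intro i _
      rw [map_pow, map_sub, map_one, map_pow, hψX]
    · rw [map_sub, map_one, map_mul, hψC, hψX, ← mul_assoc,
        ← map_mul (PowerSeries.C (R := R)), ← MvPolynomial.smul_eq_C_mul]
  have hprod := dvd_prod_sub (h := (PowerSeries.X : R⟦X⟧) ^ (N + 1)) Finset.univ
    (fun j : Fin M => ∏ i ∈ Finset.Icc 1 N,
      ((1 : R⟦X⟧) - (PowerSeries.C (MvPolynomial.X j) * PowerSeries.X) ^ i) ^ L i)
    (fun j : Fin M => 1 - PowerSeries.C ((q : ℚ) • MvPolynomial.X j) * PowerSeries.X)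
    (fun j _ => trans j)
  -- rearrange the left-hand side
  have h1mem : (1 : ℕ) ∈ Finset.Icc 1 N := Finset.mem_Icc.mpr ⟨le_rfl, hN⟩
  have hlL1 : l 1 + 1 = L 1 := by omega
  have rearr : (∏ i ∈ Finset.Icc 1 N, ∏ j : Fin M,
        ((1 : R⟦X⟧) - (PowerSeries.C (MvPolynomial.X j) * PowerSeries.X) ^ i) ^ (l i)) *
        ∏ j : Fin M, ((1 : R⟦X⟧) - PowerSeries.C (MvPolynomial.X j) * PowerSeries.X)
      = ∏ j : Fin M, ∏ i ∈ Finset.Icc 1 N,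
          ((1 : R⟦X⟧) - (PowerSeries.C (MvPolynomial.X j) * PowerSeries.X) ^ i) ^ L i := by
    rw [Finset.prod_comm, ← Finset.prod_mul_distrib]
    apply Finset.prod_congr rfl
    intro j _
    set u : R⟦X⟧ := PowerSeries.C (MvPolynomial.X j) * PowerSeries.X with hu
    have hLl : ∀ i ∈ (Finset.Icc 1 N).erase 1, ((1 : R⟦X⟧) - u ^ i) ^ (l i)
        = ((1 : R⟦X⟧) - u ^ i) ^ (L i) := by
      intro i hi
      have h2 : 2 ≤ i := by
        have h4 := Finset.mem_erase.mp hi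
        have h5 := Finset.mem_Icc.mp h4.2
        omega
      rw [hl i h2]
    calc (∏ i ∈ Finset.Icc 1 N, ((1 : R⟦X⟧) - u ^ i) ^ (l i)) * (1 - u)
        = (((1 : R⟦X⟧) - u ^ 1) ^ (l 1) * (1 - u)) *
            ∏ i ∈ (Finset.Icc 1 N).erase 1, ((1 : R⟦X⟧) - u ^ i) ^ (l i) := by
          rw [← Finset.mul_prod_erase _ _ h1mem]
          ring
      _ = ((1 : R⟦X⟧) - u ^ 1) ^ (L 1) *
            ∏ i ∈ (Finset.Icc 1 N).erase 1, ((1 : R⟦X⟧) - u ^ i) ^ (L i) := by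
          rw [pow_one, ← pow_succ, hlL1, Finset.prod_congr rfl hLl]
      _ = ∏ i ∈ Finset.Icc 1 N, ((1 : R⟦X⟧) - u ^ i) ^ (L i) := by
          have := Finset.mul_prod_erase (Finset.Icc 1 N)
            (fun i => ((1 : R⟦X⟧) - u ^ i) ^ (L i)) h1mem
          simpa using this
  rw [rearr]
  have hc := PowerSeries.X_pow_dvd_iff.mp hprod k (by omega)
  rw [map_sub, sub_eq_zero] at hc
  exact hc
end

section
/- For every partition λ of n with length l(λ), the coefficient [h_λ]ρ_n, regarded as a polynomial in q, lies in (-1)^{l(λ)-1}·ℕ[q]·(q-1); that is, (-1)^{l(λ)-1}[h_λ]ρ_n is divisible by (q-1) with quotient a polynomial in q having nonnegative integer coefficients. -/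
open MvPolynomial Finset

noncomputable section

/-- The coefficient field `ℚ(q)`, with `q` an indeterminate. -/
abbrev K : Type := RatFunc ℚ

noncomputable def q : K := RatFunc.X

/-- The ring of symmetric functions over `ℚ(q)`, realized as the polynomial ring on the
algebraically independent complete homogeneous symmetric functions `h_1, h_2, …`
(the variable `X n`, for `n ≥ 1`, represents `h_n`). -/
abbrev SymFn : Type := MvPolynomial ℕ K

/-- `h n` is the `n`-th complete homogeneous symmetric function (`h 0 = 1`). -/
noncomputable def h (n : ℕ) : SymFn := if n = 0 then 1 else X n

/-!
Expanding the recursion in the `h`-basis gives, for `λ ⊢ n`,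
`[h_λ]ρ_n = (q^n - 1)[λ = (n)] - ∑_{k ∈ λ, k < n} [h_{λ ∖ k}]ρ_{n-k}`.
For `λ = (n)` this is `(q - 1)(1 + q + ⋯ + q^{n-1})`; otherwise every summand has, by induction,
the sign `(-1)^{ℓ(λ)-2}` and a factor `q - 1`, and the leading minus sign flips the sign once
more.
-/

theorem Multiset.toFinsupp_erase {α : Type*} [DecidableEq α] {s : Multiset α} {a : α}
    (ha : a ∈ s) :
    Multiset.toFinsupp (s.erase a) = Multiset.toFinsupp s - Finsupp.single a 1 := by
  conv_rhs => rw [← Multiset.cons_erase ha, ← Multiset.singleton_add, Multiset.toFinsupp_add,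
    Multiset.toFinsupp_singleton]
  rw [add_tsub_cancel_left]

namespace Nat.Partition

theorem card_parts_pos {n : ℕ} (hn : n ≠ 0) (lam : n.Partition) :
    0 < Multiset.card lam.parts := by
  refine Multiset.card_pos.mpr fun h0 => hn ?_
  simpa [h0] using lam.parts_sum.symm

theorem parts_eq_singleton_of_card_eq_one {n : ℕ} {lam : n.Partition}
    (h : Multiset.card lam.parts = 1) : lam.parts = {n} := by
  obtain ⟨a, ha⟩ := Multiset.card_eq_one.mp h
  have han : a = n := by simpa [ha] using lam.parts_sum
  rw [ha, han]

theorem toFinsupp_parts_ne_single_of_card_ne_one {n : ℕ} {lam : n.Partition}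
    (h : Multiset.card lam.parts ≠ 1) : Multiset.toFinsupp lam.parts ≠ Finsupp.single n 1 := by
  rw [← Multiset.toFinsupp_singleton]
  exact fun heq => h (by rw [Multiset.toFinsupp.injective heq, Multiset.card_singleton])

end Nat.Partition

theorem Subsemiring.exists_eval₂_eq_of_mem_closure_singleton {R : Type*} [CommSemiring R]
    {a x : R} (hx : x ∈ Subsemiring.closure {a}) :
    ∃ P : Polynomial ℕ, P.eval₂ (Nat.castRingHom R) a = x := by
  have hle : Subsemiring.closure {a} ≤ (Polynomial.eval₂RingHom (Nat.castRingHom R) a).rangeS :=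
    Subsemiring.closure_le.mpr <|
      Set.singleton_subset_iff.mpr ⟨Polynomial.X, Polynomial.eval₂_X _ _⟩
  exact hle hx

theorem Polynomial.aeval_map_natCastRingHom {A : Type*} [Semiring A] [Algebra ℚ A] (a : A)
    (P : Polynomial ℕ) :
    Polynomial.aeval a (P.map (Nat.castRingHom ℚ)) = P.eval₂ (Nat.castRingHom A) a := by
  rw [Polynomial.aeval_def, Polynomial.eval₂_map]
  congr 1
  exact Subsingleton.elim _ _

theorem h_of_ne_zero {n : ℕ} (hn : n ≠ 0) : h n = X n := if_neg hn

section Recursion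

variable {ρ : ℕ → SymFn}
  (hρ : ∀ n, 1 ≤ n →
    ρ n = C (q ^ n - 1) * h n - ∑ k ∈ Finset.Icc 1 (n - 1), ρ (n - k) * h k)
include hρ

theorem coeff_rho {n : ℕ} (hn : 1 ≤ n) (μ : ℕ →₀ ℕ) :
    coeff μ (ρ n) = (q ^ n - 1) * coeff μ (X n : SymFn) -
      ∑ k ∈ Icc 1 (n - 1),
        if k ∈ μ.support then coeff (μ - Finsupp.single k 1) (ρ (n - k)) else 0 := by
  rw [hρ n hn, coeff_sub, coeff_sum, h_of_ne_zero (by omega), coeff_C_mul]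
  congr 1
  refine sum_congr rfl fun k hk => ?_
  rw [h_of_ne_zero (by simp at hk; omega), coeff_mul_X']

theorem coeff_single_rho {n : ℕ} (hn : 1 ≤ n) :
    coeff (Finsupp.single n 1) (ρ n) = q ^ n - 1 := by
  rw [coeff_rho hρ hn, coeff_X, if_pos rfl, mul_one, sub_eq_self]
  refine sum_eq_zero fun k hk => if_neg fun hks => ?_
  have : k = n := by simpa using Finsupp.support_single_subset hks
  simp at hk
  omega

theorem coeff_rho_of_ne_single {n : ℕ} (hn : 1 ≤ n) {μ : ℕ →₀ ℕ}
    (hμ : μ ≠ Finsupp.single n 1) :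
    coeff μ (ρ n) = -∑ k ∈ Icc 1 (n - 1),
        if k ∈ μ.support then coeff (μ - Finsupp.single k 1) (ρ (n - k)) else 0 := by
  rw [coeff_rho hρ hn, coeff_X, if_neg hμ.symm, mul_zero, zero_sub]

theorem exists_coeff_rho_eq {n : ℕ} (hn : 1 ≤ n) (lam : n.Partition) :
    ∃ p ∈ Subsemiring.closure {q}, coeff (Multiset.toFinsupp lam.parts) (ρ n) =
      (-1) ^ (Multiset.card lam.parts - 1) * (q - 1) * p := by
  induction n using Nat.strong_induction_on with
  | _ n ih =>
  by_cases hcard : Multiset.card lam.parts = 1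
  · rw [hcard, Nat.Partition.parts_eq_singleton_of_card_eq_one hcard, Multiset.toFinsupp_singleton,
      coeff_single_rho hρ hn, ← geom_sum_mul]
    have hq : q ∈ Subsemiring.closure {q} := Subsemiring.subset_closure (Set.mem_singleton q)
    exact ⟨∑ i ∈ range n, q ^ i, sum_mem fun i _ => pow_mem hq i, by ring⟩
  obtain ⟨m, hm⟩ : ∃ m, Multiset.card lam.parts = m + 2 :=
    ⟨Multiset.card lam.parts - 2, by have := lam.card_parts_pos (by omega); omega⟩
  have hterm : ∀ k ∈ Icc 1 (n - 1), ∃ p ∈ Subsemiring.closure {q},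
      (if k ∈ (Multiset.toFinsupp lam.parts).support then
        coeff (Multiset.toFinsupp lam.parts - Finsupp.single k 1) (ρ (n - k)) else 0) =
        (-1) ^ m * (q - 1) * p := by
    intro k hk
    rw [mem_Icc] at hk
    split_ifs with hks
    · rw [Multiset.toFinsupp_support, Multiset.mem_toFinset] at hks
      let lam' := Nat.Partition.partitionWithPartEquiv hk.1 (by omega) ⟨lam, hks⟩
      have hparts : lam'.parts = lam.parts.erase k :=
        Nat.Partition.partitionWithPartEquiv_apply_parts _ _ _
      obtain ⟨p, hp, hpeq⟩ := ih (n - k) (by omega) (by omega) lam'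
      refine ⟨p, hp, ?_⟩
      rw [← Multiset.toFinsupp_erase hks, ← hparts, hpeq, hparts,
        Multiset.card_erase_of_mem hks, hm]
      rfl
    · exact ⟨0, zero_mem _, by simp⟩
  choose! p hp hpeq using hterm
  refine ⟨∑ k ∈ Icc 1 (n - 1), p k, sum_mem hp, ?_⟩
  rw [coeff_rho_of_ne_single hρ hn
      (Nat.Partition.toFinsupp_parts_ne_single_of_card_ne_one hcard),
    sum_congr rfl hpeq, ← mul_sum, hm, show m + 2 - 1 = m + 1 from rfl, pow_succ]
  ring

end Recursion

theorem stmt_8_general (ρ : ℕ → SymFn)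
    (hρ : ∀ n, 1 ≤ n →
      ρ n = C (q ^ n - 1) * h n - ∑ k ∈ Finset.Icc 1 (n - 1), ρ (n - k) * h k)
    (n : ℕ) (hn : 1 ≤ n) (lam : n.Partition) :
    ∃ P : Polynomial ℕ,
      MvPolynomial.coeff (Multiset.toFinsupp lam.parts) (ρ n) =
        (-1) ^ (Multiset.card lam.parts - 1) * (q - 1) *
          Polynomial.aeval q (P.map (Nat.castRingHom ℚ)) := by
  obtain ⟨p, hp, hcoeff⟩ := exists_coeff_rho_eq hρ hn lam
  obtain ⟨P, rfl⟩ := Subsemiring.exists_eval₂_eq_of_mem_closure_singleton hp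
  exact ⟨P, by rw [hcoeff, Polynomial.aeval_map_natCastRingHom]⟩

/-- For every partition `λ` of `n`, the coefficient `[h_λ]ρ_n ∈ ℚ(q)` lies in
`(-1)^{ℓ(λ)-1} · ℕ[q] · (q-1)`: there is a polynomial `P` with nonnegative integer
coefficients such that `[h_λ]ρ_n = (-1)^{ℓ(λ)-1} (q-1) P(q)`. -/
theorem stmt_8 (ρ : ℕ → SymFn) (hρ0 : ρ 0 = 1)
    (hρ : ∀ n, 1 ≤ n →
      ρ n = C (q ^ n - 1) * h n - ∑ k ∈ Finset.Icc 1 (n - 1), ρ (n - k) * h k)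
    (n : ℕ) (hn : 1 ≤ n) (lam : n.Partition) :
    ∃ P : Polynomial ℕ,
      MvPolynomial.coeff (Multiset.toFinsupp lam.parts) (ρ n) =
        (-1) ^ (Multiset.card lam.parts - 1) * (q - 1) *
          Polynomial.aeval q (P.map (Nat.castRingHom ℚ)) :=
  stmt_8_general ρ hρ n hn lam

end
end
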